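/- Let F be a connected generalized Sierpiński carpet and x a cut point of F. If every representation of x has the same first coordinate i₀ ∈ D, then x is a cut point of φ_{i₀}(F). -/

import Mathlib

open Set Topology

noncomputable def phi (N : ℕ) (i : ℕ × ℕ) (p : ℝ × ℝ) : ℝ × ℝ :=
  ((p.1 + (i.1 : ℝ)) / (N : ℝ), (p.2 + (i.2 : ℝ)) / (N : ℝ))

noncomputable def phiW (N : ℕ) (l : List (ℕ × ℕ)) : ℝ × ℝ → ℝ × ℝ :=
  l.foldr (fun i g => phi N i ∘ g) id

def Words (D : Finset (ℕ × ℕ)) (k : ℕ) : Set (List (ℕ × ℕ)) :=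
  {l | l.length = k ∧ ∀ a ∈ l, a ∈ D}

def GoodDigits (N : ℕ) (D : Finset (ℕ × ℕ)) : Prop :=
  2 ≤ N ∧ (∀ i ∈ D, i.1 < N ∧ i.2 < N) ∧ 1 < D.card ∧ D.card < N ^ 2

def IsAttractor (N : ℕ) (D : Finset (ℕ × ℕ)) (F : Set (ℝ × ℝ)) : Prop :=
  F.Nonempty ∧ IsCompact F ∧ F = ⋃ i ∈ D, phi N i '' F

def OmegaW (N : ℕ) (D : Finset (ℕ × ℕ)) (F : Set (ℝ × ℝ)) (x : ℝ × ℝ) (k : ℕ) :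
    Set (List (ℕ × ℕ)) :=
  {l | l ∈ Words D k ∧ x ∈ phiW N l '' F}

def Ek (N : ℕ) (D : Finset (ℕ × ℕ)) (F : Set (ℝ × ℝ)) (x : ℝ × ℝ) (k : ℕ) :
    Set (ℝ × ℝ) :=
  ⋃ l ∈ Words D k \ OmegaW N D F x k, phiW N l '' F

def IsRep (N : ℕ) (D : Finset (ℕ × ℕ)) (F : Set (ℝ × ℝ)) (x : ℝ × ℝ)
    (ii : ℕ → ℕ × ℕ) : Prop :=
  (∀ k, ii k ∈ D) ∧ ∀ k : ℕ, x ∈ phiW N (List.ofFn fun j : Fin k => ii (j : ℕ)) '' F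

def SepComp (E A B : Set (ℝ × ℝ)) : Prop :=
  A ⊆ E ∧ B ⊆ E ∧
    ∀ y ∈ A, ∀ z ∈ B, connectedComponentIn E y ≠ connectedComponentIn E z

def WellSep (N : ℕ) (D : Finset (ℕ × ℕ)) (F : Set (ℝ × ℝ)) (x : ℝ × ℝ) (n : ℕ)
    (ω τ : List (ℕ × ℕ)) : Prop :=
  ∀ p : ℕ, 1 ≤ p → SepComp (Ek N D F x (n + p)) (phiW N ω '' F) (phiW N τ '' F)

section Aux

variable {N : ℕ} {D : Finset (ℕ × ℕ)} {F : Set (ℝ × ℝ)}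

lemma continuous_phi (N : ℕ) (i : ℕ × ℕ) : Continuous (phi N i) := by
  unfold phi; fun_prop

lemma phiW_cons (N : ℕ) (i : ℕ × ℕ) (l : List (ℕ × ℕ)) :
    phiW N (i :: l) = phi N i ∘ phiW N l := rfl

lemma cell_subset (hF : IsAttractor N D F) {j : ℕ × ℕ} (hj : j ∈ D) :
    phi N j '' F ⊆ F := by
  conv_rhs => rw [hF.2.2]
  intro y hy
  exact mem_biUnion hj hy

lemma exists_rep (hF : IsAttractor N D F) {y : ℝ × ℝ} (hy : y ∈ F) :
    ∃ ii, IsRep N D F y ii := by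
  have key : ∀ p : F, ∃ q : (ℕ × ℕ) × F, q.1 ∈ D ∧ (p : ℝ × ℝ) = phi N q.1 q.2.val := by
    rintro ⟨p, hp⟩
    rw [hF.2.2] at hp
    simp only [mem_iUnion] at hp
    obtain ⟨i, hi, z, hz, hzp⟩ := hp
    exact ⟨⟨i, ⟨z, hz⟩⟩, hi, hzp.symm⟩
  choose nxt hnxtD hnxt using key
  let z : ℕ → F := fun k => Nat.rec ⟨y, hy⟩ (fun _ p => (nxt p).2) k
  have hzs : ∀ k, z (k + 1) = (nxt (z k)).2 := fun k => rfl
  have main : ∀ k m, (z m).val ∈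
      phiW N (List.ofFn fun j : Fin k => (nxt (z (m + (j : ℕ)))).1) '' F := by
    intro k
    induction k with
    | zero => intro m; simpa [phiW] using (z m).2
    | succ k ih =>
      intro m
      have hlist : (List.ofFn fun j : Fin (k + 1) => (nxt (z (m + (j : ℕ)))).1) =
          (nxt (z m)).1 :: List.ofFn fun j : Fin k => (nxt (z (m + 1 + (j : ℕ)))).1 := by
        rw [List.ofFn_succ]
        simp only [Fin.val_zero, Nat.add_zero, Fin.val_succ]
        have harg : (fun i : Fin k => (nxt (z (m + ((i : ℕ) + 1)))).1) =
            (fun j : Fin k => (nxt (z (m + 1 + (j : ℕ)))).1) := by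
          funext i
          have : m + ((i : ℕ) + 1) = m + 1 + (i : ℕ) := by omega
          rw [this]
        rw [harg]
      rw [hlist, phiW_cons, Set.image_comp]
      have h1 := ih (m + 1)
      have h2 : (z m).val = phi N (nxt (z m)).1 (nxt (z m)).2.val := hnxt _
      rw [h2]
      exact ⟨_, by rw [← hzs m]; exact h1, rfl⟩
  refine ⟨fun k => (nxt (z k)).1, fun k => hnxtD _, fun k => ?_⟩
  simpa [show (z 0).val = y from rfl] using main k 0

lemma rep_of_mem_image (hF : IsAttractor N D F) {j : ℕ × ℕ} (hj : j ∈ D)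
    {x : ℝ × ℝ} (hx : x ∈ phi N j '' F) :
    ∃ ii, IsRep N D F x ii ∧ ii 0 = j := by
  obtain ⟨z, hz, rfl⟩ := hx
  obtain ⟨ii', hD', hmem'⟩ := exists_rep hF hz
  refine ⟨fun k => Nat.casesOn k j (fun m => ii' m), ⟨?_, ?_⟩, rfl⟩
  · intro k; cases k with
    | zero => exact hj
    | succ m => exact hD' m
  · intro k
    cases k with
    | zero =>
      simpa [phiW] using cell_subset hF hj ⟨z, hz, rfl⟩
    | succ k =>
      rw [List.ofFn_succ]
      simp only [Fin.val_zero, Fin.val_succ]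
      rw [phiW_cons, Set.image_comp]
      exact ⟨z, hmem' k, rfl⟩


lemma cell_compact (hF : IsAttractor N D F) (j : ℕ × ℕ) : IsCompact (phi N j '' F) :=
  hF.2.1.image (continuous_phi N j)

lemma chain_lemma (hF : IsAttractor N D F) (hFconn : IsConnected F)
    (a b : {j // j ∈ D}) :
    Relation.ReflTransGen
      (fun c d : {j // j ∈ D} =>
        (phi N c.1 '' F ∩ phi N d.1 '' F).Nonempty ∧ c ≠ d) a b := by
  set r := fun c d : {j // j ∈ D} =>
    (phi N c.1 '' F ∩ phi N d.1 '' F).Nonempty ∧ c ≠ d with hr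
  set S : Set {j // j ∈ D} := {c | Relation.ReflTransGen r a c} with hS
  set U : Set (ℝ × ℝ) := ⋃ c ∈ S, phi N c.1 '' F with hU
  set V : Set (ℝ × ℝ) := ⋃ c ∈ Sᶜ, phi N c.1 '' F with hV
  have hUc : IsClosed U :=
    Set.Finite.isClosed_biUnion (Set.toFinite S) fun c _ => (cell_compact hF c.1).isClosed
  have hVc : IsClosed V :=
    Set.Finite.isClosed_biUnion (Set.toFinite Sᶜ) fun c _ => (cell_compact hF c.1).isClosed
  have hcover : F ⊆ U ∪ V := by
    intro y hy
    rw [hF.2.2] at hy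
    simp only [mem_iUnion] at hy
    obtain ⟨i, hi, hyi⟩ := hy
    by_cases h : (⟨i, hi⟩ : {j // j ∈ D}) ∈ S
    · exact Or.inl (mem_biUnion h hyi)
    · exact Or.inr (mem_biUnion h hyi)
  have hdisj : Disjoint U V := by
    rw [Set.disjoint_left]
    intro y hyU hyV
    simp only [hU, hV, mem_iUnion] at hyU hyV
    obtain ⟨c, hcS, hyc⟩ := hyU
    obtain ⟨d, hdS, hyd⟩ := hyV
    apply hdS
    by_cases hcd : c = d
    · exact hcd ▸ hcS
    · exact hcS.tail ⟨⟨y, hyc, hyd⟩, hcd⟩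
  have hone := (isPreconnected_iff_subset_of_fully_disjoint_closed hF.2.1.isClosed).1
    hFconn.2 U V hUc hVc hcover hdisj
  have hAne : ∀ c : {j // j ∈ D}, (phi N c.1 '' F).Nonempty :=
    fun c => hF.1.image _
  cases hone with
  | inr hFV =>
    exfalso
    obtain ⟨y, hy⟩ := hAne a
    have hyV : y ∈ V := hFV (cell_subset hF a.2 hy)
    simp only [hV, mem_iUnion] at hyV
    obtain ⟨d, hdS, hyd⟩ := hyV
    apply hdS
    by_cases had : a = d
    · exact had ▸ Relation.ReflTransGen.refl
    · exact Relation.ReflTransGen.single ⟨⟨y, hy, hyd⟩, had⟩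
  | inl hFU =>
    obtain ⟨y, hy⟩ := hAne b
    have hyU : y ∈ U := hFU (cell_subset hF b.2 hy)
    simp only [hU, mem_iUnion] at hyU
    obtain ⟨c, hcS, hyc⟩ := hyU
    by_cases hcb : c = b
    · exact hcb ▸ hcS
    · exact hcS.tail ⟨⟨y, hyc, hy⟩, hcb⟩

end Aux

theorem stmt5 (N : ℕ) (D : Finset (ℕ × ℕ)) (hND : GoodDigits N D)
    (F : Set (ℝ × ℝ)) (hF : IsAttractor N D F) (hFconn : IsConnected F)
    (x : ℝ × ℝ) (hx : x ∈ F) (hcut : ¬ IsPreconnected (F \ {x}))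
    (i0 : ℕ × ℕ) (hi0 : i0 ∈ D)
    (hrep : ∀ ii, IsRep N D F x ii → ii 0 = i0) :
    x ∈ phi N i0 '' F ∧ ¬ IsPreconnected ((phi N i0 '' F) \ {x}) := by

  have hxnot : ∀ j ∈ D, j ≠ i0 → x ∉ phi N j '' F := by
    intro j hj hne hxj
    obtain ⟨ii, hii, h0⟩ := rep_of_mem_image hF hj hxj
    exact hne (h0.symm.trans (hrep ii hii))
  have hx0 : x ∈ phi N i0 '' F := by
    obtain ⟨ii, hii⟩ := exists_rep hF hx
    have h0 := hrep ii hii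
    have h1 := hii.2 1
    have hw : (List.ofFn fun j : Fin 1 => ii (j : ℕ)) = [i0] := by
      simp [List.ofFn_succ, h0]
    rw [hw] at h1
    simpa [phiW] using h1
  refine ⟨hx0, ?_⟩
  intro hpre
  apply hcut
  set B : {j // j ∈ D} → Set (ℝ × ℝ) := fun c => (phi N c.1 '' F) \ {x} with hB
  have hUB : ⋃ c : {j // j ∈ D}, B c = F \ {x} := by
    ext y
    simp only [hB, mem_iUnion, mem_diff, mem_singleton_iff]
    constructor
    · rintro ⟨c, hyc, hyx⟩
      exact ⟨cell_subset hF c.2 hyc, hyx⟩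
    · rintro ⟨hyF, hyx⟩
      rw [hF.2.2] at hyF
      simp only [mem_iUnion] at hyF
      obtain ⟨i, hi, hyi⟩ := hyF
      exact ⟨⟨i, hi⟩, hyi, hyx⟩
  have hBpre : ∀ c : {j // j ∈ D}, IsPreconnected (B c) := by
    intro c
    by_cases hc : c.1 = i0
    · have : B c = (phi N i0 '' F) \ {x} := by rw [hB]; simp only [hc]
      rw [this]; exact hpre
    · have : B c = phi N c.1 '' F := by
        rw [hB]; exact diff_singleton_eq_self (hxnot c.1 c.2 hc)
      rw [this]
      exact hFconn.isPreconnected.image _ (continuous_phi N c.1).continuousOn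
  have hchainB : ∀ c d : {j // j ∈ D},
      Relation.ReflTransGen (fun c d => (B c ∩ B d).Nonempty) c d := by
    intro c d
    refine Relation.ReflTransGen.mono ?_ c d (chain_lemma hF hFconn c d)
    rintro p q ⟨⟨y, hyp, hyq⟩, hpq⟩
    have hyx : y ∉ ({x} : Set (ℝ × ℝ)) := by
      by_cases hp : p.1 = i0
      · have hq : q.1 ≠ i0 := fun h => hpq (Subtype.ext (hp.trans h.symm))
        intro h
        exact hxnot q.1 q.2 hq (mem_singleton_iff.1 h ▸ hyq)
      · intro h
        exact hxnot p.1 p.2 hp (mem_singleton_iff.1 h ▸ hyp)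
    exact ⟨y, ⟨hyp, hyx⟩, ⟨hyq, hyx⟩⟩
  have hfin := IsPreconnected.iUnion_of_reflTransGen hBpre hchainB
  rwa [hUB] at hfin
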